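/- Let G and H be finite simple graphs with no isolated vertices. Then the injective chromatic number of the corona product satisfies χ_i(G ⊙ H) ∈ { χ_i(G), |V(H)| + Δ(G), |V(H)| + Δ(G) + 1 }. -/

import Mathlib

open SimpleGraph Finset

variable {α β : Type*}

/-- The direct (tensor) product of two simple graphs. -/
def directProd (G : SimpleGraph α) (H : SimpleGraph β) : SimpleGraph (α × β) where
  Adj x y := G.Adj x.1 y.1 ∧ H.Adj x.2 y.2
  symm.symm x y h := ⟨h.1.symm, h.2.symm⟩
  loopless.irrefl x h := G.loopless.irrefl x.1 h.1

/-- The strong product of two simple graphs. -/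
def strongProd (G : SimpleGraph α) (H : SimpleGraph β) : SimpleGraph (α × β) where
  Adj x y := (x.1 = y.1 ∧ H.Adj x.2 y.2) ∨ (G.Adj x.1 y.1 ∧ x.2 = y.2) ∨
    (G.Adj x.1 y.1 ∧ H.Adj x.2 y.2)
  symm := by
    constructor
    rintro x y (⟨h1, h2⟩ | ⟨h1, h2⟩ | ⟨h1, h2⟩)
    · exact Or.inl ⟨h1.symm, h2.symm⟩
    · exact Or.inr (Or.inl ⟨h1.symm, h2.symm⟩)
    · exact Or.inr (Or.inr ⟨h1.symm, h2.symm⟩)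
  loopless := by
    constructor
    rintro x (⟨_, h⟩ | ⟨h, _⟩ | ⟨h, _⟩)
    · exact H.loopless.irrefl _ h
    · exact G.loopless.irrefl _ h
    · exact G.loopless.irrefl _ h

/-- The lexicographic product of two simple graphs. -/
def lexProd (G : SimpleGraph α) (H : SimpleGraph β) : SimpleGraph (α × β) where
  Adj x y := G.Adj x.1 y.1 ∨ (x.1 = y.1 ∧ H.Adj x.2 y.2)
  symm := by
    constructor
    rintro x y (h | ⟨h1, h2⟩)
    · exact Or.inl h.symm
    · exact Or.inr ⟨h1.symm, h2.symm⟩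
  loopless := by
    constructor
    rintro x (h | ⟨_, h⟩)
    · exact G.loopless.irrefl _ h
    · exact H.loopless.irrefl _ h

/-- The corona product `G ⊙ H`: vertex `(v, none)` is the vertex `v` of `G`, and
`(v, some h)` is the vertex `h` of the copy of `H` attached at `v`. -/
def corona (G : SimpleGraph α) (H : SimpleGraph β) : SimpleGraph (α × Option β) where
  Adj x y :=
    (x.2 = none ∧ y.2 = none ∧ G.Adj x.1 y.1) ∨
    (x.1 = y.1 ∧ x.2 = none ∧ y.2 ≠ none) ∨
    (x.1 = y.1 ∧ x.2 ≠ none ∧ y.2 = none) ∨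
    (x.1 = y.1 ∧ ∃ a b, x.2 = some a ∧ y.2 = some b ∧ H.Adj a b)
  symm := by
    constructor
    rintro x y (⟨h1, h2, h3⟩ | ⟨h1, h2, h3⟩ | ⟨h1, h2, h3⟩ | ⟨h1, a, b, h2, h3, h4⟩)
    · exact Or.inl ⟨h2, h1, h3.symm⟩
    · exact Or.inr (Or.inr (Or.inl ⟨h1.symm, h3, h2⟩))
    · exact Or.inr (Or.inl ⟨h1.symm, h3, h2⟩)
    · exact Or.inr (Or.inr (Or.inr ⟨h1.symm, b, a, h3, h2, h4.symm⟩))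
  loopless := by
    constructor
    rintro x (⟨_, _, h⟩ | ⟨_, h1, h2⟩ | ⟨_, h1, h2⟩ | ⟨_, a, b, h2, h3, h4⟩)
    · exact G.loopless.irrefl _ h
    · exact h2 h1
    · exact h1 h2
    · rw [h2] at h3
      injection h3 with h5
      subst h5
      exact H.loopless.irrefl _ h4

/-- `f` is an injective coloring of `G`: no vertex has two distinct neighbors
with the same color. -/
def IsInjColoring {V : Type*} (G : SimpleGraph V) {n : ℕ} (f : V → Fin n) : Prop :=
  ∀ v u w, G.Adj v u → G.Adj v w → u ≠ w → f u ≠ f w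

/-- The injective chromatic number: the least `n` such that `G` admits an
injective coloring with `n` colors. -/
noncomputable def injChrom {V : Type*} (G : SimpleGraph V) : ℕ :=
  sInf {n | ∃ f : V → Fin n, IsInjColoring G f}

/-- `f` is a 2-distance coloring of `G`: distinct vertices at distance at most
two get distinct colors. -/
def IsDistTwoColoring {V : Type*} (G : SimpleGraph V) {n : ℕ} (f : V → Fin n) : Prop :=
  ∀ u v, u ≠ v → (G.Adj u v ∨ ∃ w, G.Adj u w ∧ G.Adj w v) → f u ≠ f v

/-- The 2-distance chromatic number of `G`. -/
noncomputable def distTwoChrom {V : Type*} (G : SimpleGraph V) : ℕ :=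
  sInf {n | ∃ f : V → Fin n, IsDistTwoColoring G f}


section AuxInj

variable {V : Type*}

lemma isInjColoring_of_le {G : SimpleGraph V} {n m : ℕ} (h : n ≤ m)
    {f : V → Fin n} (hf : IsInjColoring G f) :
    ∃ g : V → Fin m, IsInjColoring G g := by
  refine ⟨fun v => Fin.castLE h (f v), fun v u w h1 h2 h3 e => ?_⟩
  exact hf v u w h1 h2 h3 (Fin.castLE_injective h e)

lemma injChrom_set_nonempty (G : SimpleGraph V) [Fintype V] :
    {n | ∃ f : V → Fin n, IsInjColoring G f}.Nonempty :=
  ⟨Fintype.card V, (Fintype.equivFin V), fun _ u w _ _ h3 e =>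
    h3 ((Fintype.equivFin V).injective e)⟩

lemma exists_injColoring (G : SimpleGraph V) [Fintype V] :
    ∃ f : V → Fin (injChrom G), IsInjColoring G f :=
  Nat.sInf_mem (injChrom_set_nonempty G)

lemma injChrom_le {G : SimpleGraph V} {n : ℕ} {f : V → Fin n}
    (hf : IsInjColoring G f) : injChrom G ≤ n :=
  Nat.sInf_le ⟨f, hf⟩

lemma corona_adj_cases {α β : Type*} {G : SimpleGraph α} {H : SimpleGraph β}
    {v : α} {o : Option β} {u1 : α} {u2 : Option β}
    (h : (corona G H).Adj (v, o) (u1, u2)) :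
    (o = none ∧ u2 = none ∧ G.Adj v u1) ∨
    (o = none ∧ u1 = v ∧ ∃ b, u2 = some b) ∨
    (u1 = v ∧ u2 = none ∧ ∃ a, o = some a) ∨
    (u1 = v ∧ ∃ a b, o = some a ∧ u2 = some b ∧ H.Adj a b) := by
  rcases h with ⟨h1, h2, h3⟩ | ⟨h1, h2, h3⟩ | ⟨h1, h2, h3⟩ | ⟨h1, a, b, h2, h3, h4⟩
  · exact Or.inl ⟨h1, h2, h3⟩
  · exact Or.inr (Or.inl ⟨h2, h1.symm, Option.ne_none_iff_exists'.mp h3⟩)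
  · exact Or.inr (Or.inr (Or.inl ⟨h1.symm, h3, Option.ne_none_iff_exists'.mp h2⟩))
  · exact Or.inr (Or.inr (Or.inr ⟨h1.symm, a, b, h2, h3, h4⟩))

end AuxInj

/-- for finite graphs `G` and `H` with no isolated vertices,
`χ_i(G ⊙ H) ∈ {χ_i(G), |V(H)| + Δ(G), |V(H)| + Δ(G) + 1}`. -/
theorem injChrom_corona_mem {α β : Type*} [Fintype α] [Fintype β]
    (G : SimpleGraph α) [DecidableRel G.Adj] (H : SimpleGraph β)
    (hG : ∀ v : α, ∃ u, G.Adj v u) (hH : ∀ h : β, ∃ h', H.Adj h h') :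
    injChrom (corona G H) ∈
      ({injChrom G, Fintype.card β + G.maxDegree,
        Fintype.card β + G.maxDegree + 1} : Set ℕ) := by
  classical
  simp only [Set.mem_insert_iff, Set.mem_singleton_iff]
  by_cases hne : Nonempty α
  case neg =>
    have he : IsEmpty α := not_nonempty_iff.mp hne
    have h1 : injChrom (corona G H) = 0 :=
      Nat.eq_zero_of_le_zero (injChrom_le (n := 0)
        (f := fun x : α × Option β => (he.false x.1).elim)
        (fun v => (he.false v.1).elim))
    have h2 : injChrom G = 0 :=
      Nat.eq_zero_of_le_zero (injChrom_le (n := 0)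
        (f := fun v : α => (he.false v).elim)
        (fun v => (he.false v).elim))
    exact Or.inl (h1.trans h2.symm)
  case pos =>
  obtain ⟨v₀, hv₀⟩ := G.exists_maximal_degree_vertex
  -- a coloring of G with m := max (injChrom G) (card β + Δ + 1) colors
  obtain ⟨g0, hg0⟩ := exists_injColoring G
  obtain ⟨f, hf⟩ := isInjColoring_of_le
    (le_max_left (injChrom G) (Fintype.card β + G.maxDegree + 1)) hg0
  -- forbidden color sets
  have hcard : ∀ v : α,
      Fintype.card β ≤ (insert (f v) ((G.neighborFinset v).image f))ᶜ.card := by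
    intro v
    have h1 : (insert (f v) ((G.neighborFinset v).image f)).card ≤ G.maxDegree + 1 := by
      calc (insert (f v) ((G.neighborFinset v).image f)).card
          ≤ ((G.neighborFinset v).image f).card + 1 := Finset.card_insert_le _ _
        _ ≤ (G.neighborFinset v).card + 1 := by
            exact Nat.add_le_add_right Finset.card_image_le 1
        _ = G.degree v + 1 := by rw [G.card_neighborFinset_eq_degree]
        _ ≤ G.maxDegree + 1 := Nat.add_le_add_right (G.degree_le_maxDegree v) 1
    have h2 := Finset.card_compl (insert (f v) ((G.neighborFinset v).image f))
    rw [Fintype.card_fin] at h2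
    have hm' : Fintype.card β + G.maxDegree + 1 ≤ (max (injChrom G) (Fintype.card β + G.maxDegree + 1)) := le_max_right _ _
    omega
  have hemb : ∀ v : α,
      Nonempty (β ↪ {x // x ∈ (insert (f v) ((G.neighborFinset v).image f))ᶜ}) := by
    intro v
    apply Function.Embedding.nonempty_of_card_le
    rw [Fintype.card_coe]
    exact hcard v
  have c : ∀ v : α, β ↪ {x // x ∈ (insert (f v) ((G.neighborFinset v).image f))ᶜ} :=
    fun v => (hemb v).some
  have hc_mem : ∀ (v : α) (h : β),
      ((c v h : Fin (max (injChrom G) (Fintype.card β + G.maxDegree + 1)))) ∉ insert (f v) ((G.neighborFinset v).image f) :=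
    fun v h => Finset.mem_compl.mp (c v h).2
  have hcv : ∀ (v : α) (h : β), (c v h : Fin (max (injChrom G) (Fintype.card β + G.maxDegree + 1))) ≠ f v := by
    intro v h e
    exact hc_mem v h (by rw [e]; exact Finset.mem_insert_self _ _)
  have hcu : ∀ (v : α) (h : β) (u : α), G.Adj v u → (c v h : Fin (max (injChrom G) (Fintype.card β + G.maxDegree + 1))) ≠ f u := by
    intro v h u hadj e
    apply hc_mem v h
    rw [e]
    exact Finset.mem_insert_of_mem
      (Finset.mem_image_of_mem f ((G.mem_neighborFinset _ _).mpr hadj))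
  have hcinj : ∀ (v : α) {h h' : β}, (c v h : Fin (max (injChrom G) (Fintype.card β + G.maxDegree + 1))) = (c v h' : Fin (max (injChrom G) (Fintype.card β + G.maxDegree + 1))) → h = h' :=
    fun v _ _ e => (c v).injective (Subtype.ext e)
  -- the coloring of the corona
  have key : IsInjColoring (corona G H)
      (fun x : α × Option β => Option.elim x.2 (f x.1) (fun h => (c x.1 h : Fin (max (injChrom G) (Fintype.card β + G.maxDegree + 1))))) := by
    rintro ⟨v, o⟩ ⟨u1, u2⟩ ⟨w1, w2⟩ hxu hxw hne2
    rcases corona_adj_cases hxu with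
      ⟨rfl, rfl, hadj1⟩ | ⟨rfl, rfl, b1, rfl⟩ | ⟨rfl, rfl, a1, rfl⟩ |
      ⟨rfl, a1, b1, rfl, rfl, hab1⟩
    · rcases corona_adj_cases hxw with
        ⟨-, rfl, hadj2⟩ | ⟨-, rfl, b2, rfl⟩ | ⟨rfl, rfl, a2, h⟩ | ⟨rfl, a2, b2, h, rfl, hab2⟩
      · have h3 : u1 ≠ w1 := fun e => hne2 (by rw [e])
        exact hf _ _ _ hadj1 hadj2 h3
      · exact (hcu _ b2 _ hadj1).symm
      · exact nomatch h
      · exact nomatch h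
    · rcases corona_adj_cases hxw with
        ⟨-, rfl, hadj2⟩ | ⟨-, rfl, b2, rfl⟩ | ⟨rfl, rfl, a2, h⟩ | ⟨rfl, a2, b2, h, rfl, hab2⟩
      · exact hcu _ _ _ hadj2
      · exact fun e => hne2 (by rw [hcinj _ e])
      · exact nomatch h
      · exact nomatch h
    · rcases corona_adj_cases hxw with
        ⟨h, -, -⟩ | ⟨h, -, -⟩ | ⟨rfl, rfl, a2, h2⟩ | ⟨rfl, a2, b2, h2, rfl, hab2⟩
      · exact nomatch h
      · exact nomatch h
      · exact absurd rfl hne2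
      · exact (hcv _ _).symm
    · rcases corona_adj_cases hxw with
        ⟨h, -, -⟩ | ⟨h, -, -⟩ | ⟨rfl, rfl, a2, h2⟩ | ⟨rfl, a2, b2, h2, rfl, hab2⟩
      · exact nomatch h
      · exact nomatch h
      · exact hcv _ _
      · exact fun e => hne2 (by rw [hcinj _ e])
  have hub : injChrom (corona G H) ≤ (max (injChrom G) (Fintype.card β + G.maxDegree + 1)) := injChrom_le key
  -- lower bound 1
  have hlb1 : injChrom G ≤ injChrom (corona G H) := by
    obtain ⟨F, hF⟩ := exists_injColoring (corona G H)
    refine injChrom_le (f := fun v : α => F (v, none)) ?_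
    intro v u w h1 h2 h3
    refine hF (v, none) (u, none) (w, none)
      (Or.inl ⟨rfl, rfl, h1⟩) (Or.inl ⟨rfl, rfl, h2⟩) ?_
    intro e
    exact h3 (congrArg Prod.fst e)
  -- lower bound 2
  have hlb2 : Fintype.card β + G.maxDegree ≤ injChrom (corona G H) := by
    obtain ⟨F, hF⟩ := exists_injColoring (corona G H)
    have hinj : Function.Injective
        (Sum.elim (fun u : {u // u ∈ G.neighborFinset v₀} => F (u.1, none))
          (fun h : β => F (v₀, some h))) := by
      rintro (⟨u, hu⟩ | h) (⟨u', hu'⟩ | h') e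
      · simp only [Sum.inl.injEq, Subtype.mk.injEq]
        by_contra h3
        exact hF (v₀, none) (u, none) (u', none)
          (Or.inl ⟨rfl, rfl, (G.mem_neighborFinset _ _).mp hu⟩)
          (Or.inl ⟨rfl, rfl, (G.mem_neighborFinset _ _).mp hu'⟩)
          (fun e2 => h3 (congrArg Prod.fst e2)) e
      · exact absurd e (hF (v₀, none) (u, none) (v₀, some h')
          (Or.inl ⟨rfl, rfl, (G.mem_neighborFinset _ _).mp hu⟩)
          (Or.inr (Or.inl ⟨rfl, rfl, Option.some_ne_none _⟩))
          (by simp))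
      · exact absurd e (hF (v₀, none) (v₀, some h) (u', none)
          (Or.inr (Or.inl ⟨rfl, rfl, Option.some_ne_none _⟩))
          (Or.inl ⟨rfl, rfl, (G.mem_neighborFinset _ _).mp hu'⟩)
          (by simp))
      · simp only [Sum.inr.injEq]
        by_contra h3
        exact hF (v₀, none) (v₀, some h) (v₀, some h')
          (Or.inr (Or.inl ⟨rfl, rfl, Option.some_ne_none _⟩))
          (Or.inr (Or.inl ⟨rfl, rfl, Option.some_ne_none _⟩))
          (fun e2 => h3 (Option.some_injective _ (congrArg Prod.snd e2))) e
    have hcardle := Fintype.card_le_of_injective _ hinj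
    simp only [Fintype.card_sum, Fintype.card_coe, Fintype.card_fin,
      G.card_neighborFinset_eq_degree] at hcardle
    omega
  have hmax : (max (injChrom G) (Fintype.card β + G.maxDegree + 1)) = injChrom G ∨ (max (injChrom G) (Fintype.card β + G.maxDegree + 1)) = Fintype.card β + G.maxDegree + 1 :=
    max_choice _ _
  omega
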